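/- arXiv:1507.06352 — 2 statements merged into one kernel-verified Lean document; each statement's English description precedes it below -/
import Mathlib

section
/- For every G* in the convex hull of 𝒢 there exists a sequence G_1, G_2, … of elements of 𝒢 with ‖G* − G_ℓ‖ → 0; equivalently, the Hausdorff distance between conv(𝒢) and 𝒢 is zero. -/
open MeasureTheory

noncomputable section

/-- The uniform probability measure on `[0,1]`. -/
def unif : Measure ℝ := volume.restrict (Set.Icc (0:ℝ) 1)

/-- Population class frequencies `π_τ`. -/
def piTau {K : ℕ} (τ : ℝ → Fin K) (t : Fin K) : ℝ :=
  ∫ y, (if τ y = t then (1:ℝ) else 0) ∂unif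

/-- The vector `g_{τ=t} ∈ ℝ^m`, `g_{τ=t}(i) = ∫ ω(x_i,y) 1{τ(y)=t} dy`. -/
def gTau {m K : ℕ} (w : ℝ → ℝ → ℝ) (x : Fin m → ℝ)
    (τ : ℝ → Fin K) (t : Fin K) (i : Fin m) : ℝ :=
  ∫ y, w (x i) y * (if τ y = t then 1 else 0) ∂unif

/-- The stacked vector `G_τ = (g_{τ=1}/√m, …, g_{τ=K}/√m, π_τ) ∈ ℝ^{mK+K}`. -/
def GTauVec {m K : ℕ} (w : ℝ → ℝ → ℝ) (x : Fin m → ℝ) (τ : ℝ → Fin K) :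
    EuclideanSpace ℝ ((Fin K × Fin m) ⊕ Fin K) :=
  (EuclideanSpace.equiv ((Fin K × Fin m) ⊕ Fin K) ℝ).symm
    (Sum.elim (fun q => gTau w x τ q.1 q.2 / Real.sqrt m) (fun t => piTau τ t))

/-- The set `𝒢 = {G_τ : τ measurable [0,1] → [K]}`. -/
def Gset {m K : ℕ} (w : ℝ → ℝ → ℝ) (x : Fin m → ℝ) :
    Set (EuclideanSpace ℝ ((Fin K × Fin m) ⊕ Fin K)) :=
  {v | ∃ τ : ℝ → Fin K, Measurable τ ∧ v = GTauVec w x τ}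

/-! Mixing two labellings `τ` and `σ` along the alternating blocks `{y | ⌊y / h⌋ even}` gives,
as `h → 0`, vectors converging to the midpoint of `G_τ` and `G_σ`: translating by `h` swaps the
blocks with their complement, so by continuity of translation in `L¹` every integrable function
carries asymptotically half of its integral on the blocks. Hence the closure of `𝒢` is closed
under midpoints, so it is convex and contains `conv 𝒢`. -/

open Filter Topology Set

theorem Icc_subset_of_isClosed_of_add_div_two_mem {T : Set ℝ} (hT : IsClosed T)
    (hmid : ∀ a ∈ T, ∀ b ∈ T, (a + b) / 2 ∈ T) {a b : ℝ} (ha : a ∈ T) (hb : b ∈ T) :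
    Icc a b ⊆ T := by
  intro c ⟨hac, hcb⟩
  by_contra hc
  have hA : sSup (T ∩ Icc a c) ∈ T ∩ Icc a c :=
    (hT.inter isClosed_Icc).csSup_mem ⟨a, ha, le_rfl, hac⟩ (bddAbove_Icc.mono inter_subset_right)
  have hB : sInf (T ∩ Icc c b) ∈ T ∩ Icc c b :=
    (hT.inter isClosed_Icc).csInf_mem ⟨b, hb, hcb, le_rfl⟩ (bddBelow_Icc.mono inter_subset_right)
  set p := sSup (T ∩ Icc a c)
  set q := sInf (T ∩ Icc c b)
  have hpc : p < c := lt_of_le_of_ne hA.2.2 fun h => hc (h ▸ hA.1)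
  have hcq : c < q := lt_of_le_of_ne hB.2.1 fun h => hc (h ▸ hB.1)
  have hm := hmid p hA.1 q hB.1
  rcases le_total ((p + q) / 2) c with hmc | hcm
  · have : (p + q) / 2 ≤ p :=
      le_csSup (bddAbove_Icc.mono inter_subset_right) ⟨hm, by linarith [hA.2.1], hmc⟩
    linarith
  · have : q ≤ (p + q) / 2 :=
      csInf_le (bddBelow_Icc.mono inter_subset_right) ⟨hm, hcm, by linarith [hB.2.2]⟩
    linarith

section MidpointConvex

variable {E : Type*} [AddCommGroup E] [Module ℝ E] [TopologicalSpace E] [IsTopologicalAddGroup E]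
  [ContinuousSMul ℝ E] {s : Set E}

theorem convex_of_isClosed_of_midpoint_mem (hs : IsClosed s)
    (hmid : ∀ x ∈ s, ∀ y ∈ s, midpoint ℝ x y ∈ s) : Convex ℝ s := by
  intro x hx y hy a b ha hb hab
  obtain rfl : b = 1 - a := by linarith
  have hT : IsClosed {c : ℝ | c • x + (1 - c) • y ∈ s} := hs.preimage (by fun_prop)
  refine Icc_subset_of_isClosed_of_add_div_two_mem hT (fun c hc d hd => ?_) (a := 0) (b := 1)
    (by simpa using hy) (by simpa using hx) ⟨ha, by linarith⟩
  show ((c + d) / 2) • x + (1 - (c + d) / 2) • y ∈ s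
  convert hmid _ hc _ hd using 1
  simp only [midpoint_eq_smul_add, invOf_eq_inv]
  module

theorem convex_closure_of_midpoint_mem_closure
    (hmid : ∀ x ∈ s, ∀ y ∈ s, midpoint ℝ x y ∈ closure s) : Convex ℝ (closure s) := by
  refine convex_of_isClosed_of_midpoint_mem isClosed_closure fun x hx y hy => ?_
  rw [← closure_closure (s := s)]
  refine map_mem_closure₂ ?_ hx hy hmid
  show Continuous fun p : E × E => midpoint ℝ p.1 p.2
  simp only [midpoint_eq_smul_add]
  fun_prop

end MidpointConvex

theorem tendsto_integral_norm_comp_add_sub {G E : Type*} [AddGroup G] [TopologicalSpace G]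
    [IsTopologicalAddGroup G] [MeasurableSpace G] [BorelSpace G] [LocallyCompactSpace G]
    [SecondCountableTopology G] (μ : Measure G) [μ.IsAddHaarMeasure] [NormedAddCommGroup E]
    {f : G → E} (hf : Integrable f μ) :
    Tendsto (fun h => ∫ y, ‖f (h + y) - f y‖ ∂μ) (𝓝 0) (𝓝 0) := by
  have : Fact ((1 : ENNReal) ≠ ⊤) := ⟨ENNReal.one_ne_top⟩
  have hcont : Tendsto (fun h : G => DomAddAct.mk h +ᵥ hf.toL1 f) (𝓝 0) (𝓝 (hf.toL1 f)) :=
    Continuous.tendsto' (by fun_prop) 0 _ (by simp)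
  have hdist (h : G) : ∫ y, ‖f (h + y) - f y‖ ∂μ
      = dist (DomAddAct.mk h +ᵥ hf.toL1 f) (hf.toL1 f) := by
    have hfh : Integrable (fun y => f (h + y)) μ := hf.comp_add_left h
    rw [dist_eq_norm, show DomAddAct.mk h +ᵥ hf.toL1 f = hfh.toL1 _ from rfl,
      ← Integrable.toL1_sub, L1.norm_of_fun_eq_integral_norm]
    rfl
  simpa [hdist] using tendsto_iff_dist_tendsto_zero.mp hcont

def evenBlocks (h : ℝ) : Set ℝ := {y | Even ⌊y / h⌋}

instance (h : ℝ) : DecidablePred (· ∈ evenBlocks h) := fun y =>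
  inferInstanceAs (Decidable (Even ⌊y / h⌋))

theorem measurableSet_evenBlocks (h : ℝ) : MeasurableSet (evenBlocks h) :=
  (measurable_id.div_const h).floor (show MeasurableSet {n : ℤ | Even n} from trivial)

theorem add_mem_evenBlocks_iff {h : ℝ} (hh : h ≠ 0) (y : ℝ) :
    h + y ∈ evenBlocks h ↔ y ∉ evenBlocks h := by
  simp only [evenBlocks, mem_ofPred_eq, add_div, div_self hh, add_comm (1:ℝ), Int.floor_add_one,
    Int.even_add_one]

section HalfMass

variable {E : Type*} [NormedAddCommGroup E] [NormedSpace ℝ E]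

theorem norm_setIntegral_evenBlocks_sub_le {f : ℝ → E} (hf : Integrable f) {h : ℝ} (hh : h ≠ 0) :
    ‖(∫ y in evenBlocks h, f y) - (2:ℝ)⁻¹ • ∫ y, f y‖ ≤ 2⁻¹ * ∫ y, ‖f (h + y) - f y‖ := by
  have hE := measurableSet_evenBlocks h
  have hshift : ∫ y in evenBlocks h, f y = ∫ y in (evenBlocks h)ᶜ, f (h + y) := by
    rw [← integral_indicator hE, ← integral_add_left_eq_self _ h, ← integral_indicator hE.compl]
    congr 1 with y
    by_cases hy : y ∈ evenBlocks h <;> simp [indicator, add_mem_evenBlocks_iff hh, hy]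
  have hfh : Integrable (fun y => f (h + y)) := hf.comp_add_left h
  calc ‖(∫ y in evenBlocks h, f y) - (2:ℝ)⁻¹ • ∫ y, f y‖
      = 2⁻¹ * ‖∫ y in (evenBlocks h)ᶜ, (f (h + y) - f y)‖ := by
        rw [integral_sub hfh.integrableOn hf.integrableOn, ← integral_add_compl hE hf, ← hshift,
          ← norm_smul_of_nonneg (by norm_num)]
        congr 1
        module
    _ ≤ 2⁻¹ * ∫ y, ‖f (h + y) - f y‖ := by
        gcongr
        exact (norm_integral_le_integral_norm _).trans
          (setIntegral_le_integral (hfh.sub hf).norm (ae_of_all _ fun _ => norm_nonneg _))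

theorem tendsto_setIntegral_evenBlocks {f : ℝ → E} (hf : Integrable f) :
    Tendsto (fun h => ∫ y in evenBlocks h, f y) (𝓝[≠] 0) (𝓝 ((2:ℝ)⁻¹ • ∫ y, f y)) := by
  have hbound : Tendsto (fun h => 2⁻¹ * ∫ y, ‖f (h + y) - f y‖) (𝓝[≠] 0) (𝓝 0) := by
    simpa using ((tendsto_integral_norm_comp_add_sub volume hf).const_mul (2:ℝ)⁻¹).mono_left
      nhdsWithin_le_nhds
  rw [tendsto_iff_norm_sub_tendsto_zero]
  exact squeeze_zero' (Eventually.of_forall fun _ => norm_nonneg _)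
    (eventually_nhdsWithin_of_forall fun h hh => norm_setIntegral_evenBlocks_sub_le hf hh) hbound

theorem tendsto_setIntegral_piecewise_evenBlocks {s : Set ℝ} (hs : MeasurableSet s) {u v : ℝ → E}
    (hu : IntegrableOn u s) (hv : IntegrableOn v s) :
    Tendsto (fun h => ∫ y in s, (evenBlocks h).piecewise u v y) (𝓝[≠] 0)
      (𝓝 (midpoint ℝ (∫ y in s, u y) (∫ y in s, v y))) := by
  have huv : IntegrableOn (fun y => u y - v y) s := hu.sub hv
  have hsplit (h : ℝ) : ∫ y in s, (evenBlocks h).piecewise u v y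
      = (∫ y in evenBlocks h, s.indicator (fun y => u y - v y) y) + ∫ y in s, v y := by
    have hpw (y : ℝ) : (evenBlocks h).piecewise u v y
        = (evenBlocks h).indicator (fun y => u y - v y) y + v y := by
      by_cases hy : y ∈ evenBlocks h <;> simp [hy]
    simp_rw [hpw]
    rw [integral_add (huv.indicator (measurableSet_evenBlocks h)) hv,
      setIntegral_indicator (measurableSet_evenBlocks h), setIntegral_indicator hs, inter_comm]
  have hlim := (tendsto_setIntegral_evenBlocks
    ((integrable_indicator_iff hs).mpr huv)).add_const (∫ y in s, v y)
  rw [integral_indicator hs, integral_sub hu hv] at hlim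
  convert hlim using 2
  · exact hsplit _
  · rw [midpoint_eq_smul_add, invOf_eq_inv]; module

theorem tendsto_setIntegral_comp_piecewise_evenBlocks {α : Type*} {s : Set ℝ}
    (hs : MeasurableSet s) (Φ : ℝ → α → E) {τ σ : ℝ → α}
    (hτ : IntegrableOn (fun y => Φ y (τ y)) s) (hσ : IntegrableOn (fun y => Φ y (σ y)) s) :
    Tendsto (fun h => ∫ y in s, Φ y ((evenBlocks h).piecewise τ σ y)) (𝓝[≠] 0)
      (𝓝 (midpoint ℝ (∫ y in s, Φ y (τ y)) (∫ y in s, Φ y (σ y)))) := by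
  simpa only [apply_piecewise] using tendsto_setIntegral_piecewise_evenBlocks hs hτ hσ

end HalfMass

instance : IsFiniteMeasure unif := by unfold unif; infer_instance

theorem integrable_unif_mul_ite {K : ℕ} {c : ℝ → ℝ} (hc : Measurable c) (hc1 : ∀ y, |c y| ≤ 1)
    {τ : ℝ → Fin K} (hτ : Measurable τ) (t : Fin K) :
    Integrable (fun y => c y * if τ y = t then 1 else 0) unif := by
  refine .of_bound (hc.mul (Measurable.ite (hτ (measurableSet_singleton t)) measurable_const
    measurable_const)).aestronglyMeasurable 1 (ae_of_all _ fun y => ?_)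
  split_ifs <;> simp [hc1]

section Mixing

variable {m K : ℕ} {w : ℝ → ℝ → ℝ} {x : Fin m → ℝ} {τ σ : ℝ → Fin K}

theorem tendsto_gTau_piecewise_evenBlocks (hw_meas : Measurable (Function.uncurry w))
    (hw : ∀ a b, w a b ∈ Icc (0:ℝ) 1) (hτ : Measurable τ) (hσ : Measurable σ) (t : Fin K)
    (i : Fin m) :
    Tendsto (fun h => gTau w x ((evenBlocks h).piecewise τ σ) t i) (𝓝[≠] 0)
      (𝓝 (midpoint ℝ (gTau w x τ t i) (gTau w x σ t i))) := by
  have hwi : Measurable (w (x i)) := hw_meas.comp (measurable_const.prodMk measurable_id)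
  have hwi1 (y : ℝ) : |w (x i) y| ≤ 1 :=
    abs_le.mpr ⟨by linarith [(hw (x i) y).1], (hw (x i) y).2⟩
  exact tendsto_setIntegral_comp_piecewise_evenBlocks measurableSet_Icc
    (fun y a => w (x i) y * if a = t then 1 else 0) (integrable_unif_mul_ite hwi hwi1 hτ t)
    (integrable_unif_mul_ite hwi hwi1 hσ t)

theorem tendsto_piTau_piecewise_evenBlocks (hτ : Measurable τ) (hσ : Measurable σ) (t : Fin K) :
    Tendsto (fun h => piTau ((evenBlocks h).piecewise τ σ) t) (𝓝[≠] 0)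
      (𝓝 (midpoint ℝ (piTau τ t) (piTau σ t))) := by
  have hint (ρ : ℝ → Fin K) (hρ : Measurable ρ) :
      Integrable (fun y => if ρ y = t then (1:ℝ) else 0) unif := by
    simpa using integrable_unif_mul_ite measurable_const (fun _ => (abs_one (α := ℝ)).le) hρ t
  exact tendsto_setIntegral_comp_piecewise_evenBlocks measurableSet_Icc
    (fun _ a => if a = t then 1 else 0) (hint τ hτ) (hint σ hσ)

theorem tendsto_GTauVec_piecewise_evenBlocks (hw_meas : Measurable (Function.uncurry w))
    (hw : ∀ a b, w a b ∈ Icc (0:ℝ) 1) (hτ : Measurable τ) (hσ : Measurable σ) :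
    Tendsto (fun h => GTauVec w x ((evenBlocks h).piecewise τ σ)) (𝓝[≠] 0)
      (𝓝 (midpoint ℝ (GTauVec w x τ) (GTauVec w x σ))) := by
  set e := EuclideanSpace.equiv ((Fin K × Fin m) ⊕ Fin K) ℝ
  have hcoord : Tendsto (fun h => e (GTauVec w x ((evenBlocks h).piecewise τ σ))) (𝓝[≠] 0)
      (𝓝 (e (midpoint ℝ (GTauVec w x τ) (GTauVec w x σ)))) := by
    rw [tendsto_pi_nhds]
    rintro (⟨t, i⟩ | t)
    · simp only [GTauVec, e, ContinuousLinearEquiv.apply_symm_apply, Sum.elim_inl]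
      convert (tendsto_gTau_piecewise_evenBlocks hw_meas hw hτ hσ t i).div_const √m using 2
      simp only [midpoint_eq_smul_add, invOf_eq_inv, smul_eq_mul, map_smul, map_add,
        ContinuousLinearEquiv.apply_symm_apply, Pi.add_apply, Pi.smul_apply, Sum.elim_inl]
      ring
    · simpa [GTauVec, e, midpoint_eq_smul_add, mul_add] using
        tendsto_piTau_piecewise_evenBlocks hτ hσ t
  simpa [Function.comp_def] using (e.symm.continuous.tendsto _).comp hcoord

theorem midpoint_GTauVec_mem_closure_Gset (hw_meas : Measurable (Function.uncurry w))
    (hw : ∀ a b, w a b ∈ Icc (0:ℝ) 1) (hτ : Measurable τ) (hσ : Measurable σ) :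
    midpoint ℝ (GTauVec w x τ) (GTauVec w x σ) ∈ closure (Gset w x) :=
  mem_closure_of_tendsto (tendsto_GTauVec_piecewise_evenBlocks hw_meas hw hτ hσ)
    (Eventually.of_forall fun h => ⟨_, hτ.piecewise (measurableSet_evenBlocks h) hσ, rfl⟩)

theorem convexHull_Gset_subset_closure (hw_meas : Measurable (Function.uncurry w))
    (hw : ∀ a b, w a b ∈ Icc (0:ℝ) 1) :
    convexHull ℝ (Gset (K := K) w x) ⊆ closure (Gset w x) := by
  refine convexHull_min subset_closure (convex_closure_of_midpoint_mem_closure ?_)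
  rintro _ ⟨τ, hτ, rfl⟩ _ ⟨σ, hσ, rfl⟩
  exact midpoint_GTauVec_mem_closure_Gset hw_meas hw hτ hσ

end Mixing

theorem Gset_essentially_convex_general
    (m K : ℕ)
    (w : ℝ → ℝ → ℝ) (hw_meas : Measurable (Function.uncurry w))
    (hw : ∀ x y, w x y ∈ Set.Icc (0:ℝ) 1)
    (x : Fin m → ℝ) :
    (∀ Gstar ∈ convexHull ℝ (Gset (m := m) (K := K) w x),
      ∃ G : ℕ → EuclideanSpace ℝ ((Fin K × Fin m) ⊕ Fin K),
        (∀ ℓ, G ℓ ∈ Gset (m := m) (K := K) w x) ∧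
        Filter.Tendsto (fun ℓ => ‖Gstar - G ℓ‖) Filter.atTop (nhds 0)) ∧
    Metric.hausdorffDist (convexHull ℝ (Gset (m := m) (K := K) w x))
      (Gset (m := m) (K := K) w x) = 0 := by
  have hsub := convexHull_Gset_subset_closure (K := K) (x := x) hw_meas hw
  refine ⟨fun Gstar hG => ?_, ?_⟩
  · obtain ⟨G, hGmem, hGlim⟩ := mem_closure_iff_seq_limit.mp (hsub hG)
    refine ⟨G, hGmem, ?_⟩
    simpa [norm_sub_rev] using tendsto_iff_norm_sub_tendsto_zero.mp hGlim
  · have hcl : closure (convexHull ℝ (Gset (K := K) w x)) = closure (Gset w x) :=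
      (closure_minimal hsub isClosed_closure).antisymm (closure_mono (subset_convexHull ℝ _))
    simp [Metric.hausdorffDist, Metric.hausdorffEDist_zero_iff_closure_eq_closure.mpr hcl]

/-- For every `G*` in the convex hull of `𝒢` there is a sequence of elements
of `𝒢` converging to it in norm; equivalently, `d_Haus(conv 𝒢, 𝒢) = 0`. -/
theorem Gset_essentially_convex
    (m K : ℕ) (hK : 1 ≤ K)
    (w : ℝ → ℝ → ℝ) (hw_meas : Measurable (Function.uncurry w))
    (hw : ∀ x y, w x y ∈ Set.Icc (0:ℝ) 1)
    (x : Fin m → ℝ) (hx : ∀ i, x i ∈ Set.Icc (0:ℝ) 1) :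
    (∀ Gstar ∈ convexHull ℝ (Gset (m := m) (K := K) w x),
      ∃ G : ℕ → EuclideanSpace ℝ ((Fin K × Fin m) ⊕ Fin K),
        (∀ ℓ, G ℓ ∈ Gset (m := m) (K := K) w x) ∧
        Filter.Tendsto (fun ℓ => ‖Gstar - G ℓ‖) Filter.atTop (nhds 0)) ∧
    Metric.hausdorffDist (convexHull ℝ (Gset (m := m) (K := K) w x))
      (Gset (m := m) (K := K) w x) = 0 :=
  Gset_essentially_convex_general m K w hw_meas hw x
end
end

section
/- With the dot-product-plus-blockmodel parameterization: if S=(U,B), S̄=(U,B̄), T=(V,D), T̄=(V,D̄) satisfy ‖B_i − B̄_i‖ ≤ ε for all i∈[m] and ‖D_j − D̄_j‖ ≤ ε for all j∈[n], and measurable σ=(μ,β), σ̄=(μ,β̄), τ=(ν,δ), τ̄=(ν,δ̄) satisfy ‖β(x)−β̄(x)‖ ≤ ε and ‖δ(y)−δ̄(y)‖ ≤ ε pointwise, then for every θ∈Θ: |R_A(S,T;θ) − R_A(S̄,T̄;θ)| ≤ 12ε, |R_ω(S,τ;θ) − R_ω(S̄,τ;θ)| ≤ 12ε, |R_ω(σ,τ;θ)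 − R_ω(σ,τ̄;θ)| ≤ 12ε; and the CDF differences satisfy ‖Ψ_S − Ψ_{S̄}‖² ≤ Kdε, ‖Ψ_T − Ψ_{T̄}‖² ≤ Kdε, ‖Ψ_σ − Ψ_{σ̄}‖² ≤ Kdε, ‖Ψ_τ − Ψ_{τ̄}‖² ≤ Kdε. -/
open MeasureTheory

noncomputable section

/-- The set `𝒟 = {c ∈ [0,1)^d : ‖c‖ ≤ 1}`. -/
def Dset (d : ℕ) : Set (Fin d → ℝ) :=
  {c | (∀ r, 0 ≤ c r ∧ c r < 1) ∧ Real.sqrt (∑ r : Fin d, (c r) ^ 2) ≤ 1}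

/-- Latent variable space `𝒮 = 𝒯 = [K] × ℝ^d`. -/
abbrev SType (K d : ℕ) : Type := Fin K × (Fin d → ℝ)

/-- `ω_θ((u,b),(v,c)) = bᵀc · θ_{uv}`. -/
def wTheta {K d : ℕ} (θ : Fin K → Fin K → ℝ) (s t : SType K d) : ℝ :=
  (∑ r : Fin d, s.2 r * t.2 r) * θ s.1 t.1

/-- Empirical risk `R_A(S,T;θ)` for a given data matrix `A`. -/
def RAmat {m n K d : ℕ} (A : Fin m → Fin n → ℝ)
    (S : Fin m → SType K d) (T : Fin n → SType K d) (θ : Fin K → Fin K → ℝ) : ℝ :=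
  (1 / ((n : ℝ) * m)) * ∑ i : Fin m, ∑ j : Fin n, (A i j - wTheta θ (S i) (T j)) ^ 2

/-- Population risk `R_ω(S,τ;θ)` (rows fixed at `x_1,…,x_m`). -/
def ROmS {m K d : ℕ} (w : ℝ → ℝ → ℝ) (x : Fin m → ℝ)
    (S : Fin m → SType K d) (τ : ℝ → SType K d) (θ : Fin K → Fin K → ℝ) : ℝ :=
  (1 / (m : ℝ)) * ∑ i : Fin m, ∫ y, (w (x i) y - wTheta θ (S i) (τ y)) ^ 2 ∂unif

/-- Population risk `R_ω(σ,τ;θ)`. -/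
def ROmSig {K d : ℕ} (w : ℝ → ℝ → ℝ)
    (σ : ℝ → SType K d) (τ : ℝ → SType K d) (θ : Fin K → Fin K → ℝ) : ℝ :=
  ∫ x, (∫ y, (w x y - wTheta θ (σ x) (τ y)) ^ 2 ∂unif) ∂unif

open Classical in
/-- Empirical latent-variable CDF `Ψ_S(k,c)` (also used for `Ψ_T`). -/
def PsiT {n K d : ℕ} (T : Fin n → SType K d) (k : Fin K) (c : Fin d → ℝ) : ℝ :=
  (1 / (n : ℝ)) * ∑ j : Fin n,
    if (T j).1 ≤ k ∧ (∀ r, (T j).2 r ≤ c r) then 1 else 0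

open Classical in
/-- Population latent-variable CDF `Ψ_σ(k,c)` (also used for `Ψ_τ`). -/
def PsiTau {K d : ℕ} (τ : ℝ → SType K d) (k : Fin K) (c : Fin d → ℝ) : ℝ :=
  ∫ y, (if (τ y).1 ≤ k ∧ (∀ r, (τ y).2 r ≤ c r) then (1:ℝ) else 0) ∂unif

/-- The uniform measure on `[0,1)^d`. -/
def unifD (d : ℕ) : Measure (Fin d → ℝ) :=
  Measure.pi fun _ : Fin d => volume.restrict (Set.Ico (0:ℝ) 1)

/-- Squared norm `‖Ψ‖² = Σ_k ∫_{[0,1)^d} Ψ(k,c)² dc`. -/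
def PsiNormSq {K d : ℕ} (Ψ : Fin K → (Fin d → ℝ) → ℝ) : ℝ :=
  ∑ k : Fin K, ∫ c, (Ψ k c) ^ 2 ∂(unifD d)

/-!
The squared loss `(a - x)²` with `a, x ∈ [0,1]` is `2`-Lipschitz in `x`, and by Cauchy–Schwarz
`ω_θ((u,b),(v,c)) = bᵀc θ_{uv}` moves by at most `‖b - b̄‖ + ‖c - c̄‖` on the unit ball. Every
risk is an expectation (an average being one for the uniform measure on a finite index set), so
the risk bounds follow pointwise.

For the CDFs, the indicator of `{u ≤ k, b ≤ c}` changes by at most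
`∑_r |1{b_r ≤ c_r} - 1{b̄_r ≤ c_r}|`, whose integral over `c ∈ [0,1)^d` is at most
`∑_r |b_r - b̄_r| ≤ dε`. A CDF difference is bounded by `1`, so its square is bounded by its
absolute value, and Fubini gives `∫ (Ψ - Ψ̄)(k,c)² dc ≤ dε` for each label `k`.
-/

open Set ProbabilityTheory

section DotProduct

variable {d : ℕ}

lemma abs_sum_mul_le_sqrt_mul_sqrt {ι : Type*} (s : Finset ι) (f g : ι → ℝ) :
    |∑ i ∈ s, f i * g i| ≤ √(∑ i ∈ s, f i ^ 2) * √(∑ i ∈ s, g i ^ 2) := by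
  rw [← Real.sqrt_sq_eq_abs, ← Real.sqrt_mul (Finset.sum_nonneg fun i _ => sq_nonneg (f i))]
  exact Real.sqrt_le_sqrt (Finset.sum_mul_sq_le_sq_mul_sq s f g)

lemma abs_apply_le_sqrt_sum_sq {ι : Type*} [Fintype ι] (f : ι → ℝ) (i : ι) :
    |f i| ≤ √(∑ j, f j ^ 2) :=
  Real.abs_le_sqrt (Finset.single_le_sum (fun j _ => sq_nonneg (f j)) (Finset.mem_univ i))

lemma sum_mul_mem_Icc_of_mem_Dset {b c : Fin d → ℝ} (hb : b ∈ Dset d) (hc : c ∈ Dset d) :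
    ∑ r, b r * c r ∈ Icc (0 : ℝ) 1 := by
  refine ⟨Finset.sum_nonneg fun r _ => mul_nonneg (hb.1 r).1 (hc.1 r).1, ?_⟩
  calc ∑ r, b r * c r ≤ |∑ r, b r * c r| := le_abs_self _
    _ ≤ √(∑ r, b r ^ 2) * √(∑ r, c r ^ 2) := abs_sum_mul_le_sqrt_mul_sqrt _ _ _
    _ ≤ 1 := mul_le_one₀ hb.2 (Real.sqrt_nonneg _) hc.2

lemma abs_sum_mul_sub_sum_mul_le {b b' c c' : Fin d → ℝ}
    (hb' : √(∑ r, b' r ^ 2) ≤ 1) (hc : √(∑ r, c r ^ 2) ≤ 1) :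
    |∑ r, b r * c r - ∑ r, b' r * c' r| ≤
      √(∑ r, (b r - b' r) ^ 2) + √(∑ r, (c r - c' r) ^ 2) := by
  have hsplit : ∑ r, b r * c r - ∑ r, b' r * c' r =
      ∑ r, (b r - b' r) * c r + ∑ r, b' r * (c r - c' r) := by
    simp only [← Finset.sum_sub_distrib, ← Finset.sum_add_distrib]
    exact Finset.sum_congr rfl fun r _ => by ring
  rw [hsplit]
  refine (abs_add_le _ _).trans (add_le_add ?_ ?_)
  · calc _ ≤ √(∑ r, (b r - b' r) ^ 2) * √(∑ r, c r ^ 2) := abs_sum_mul_le_sqrt_mul_sqrt _ _ _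
      _ ≤ _ := mul_le_of_le_one_right (Real.sqrt_nonneg _) hc
  · calc _ ≤ √(∑ r, b' r ^ 2) * √(∑ r, (c r - c' r) ^ 2) := abs_sum_mul_le_sqrt_mul_sqrt _ _ _
      _ ≤ _ := mul_le_of_le_one_left (Real.sqrt_nonneg _) hb'

end DotProduct

section SquaredLoss

variable {K d : ℕ} {θ : Fin K → Fin K → ℝ}

lemma wTheta_mem_Icc (hθ : ∀ u v, θ u v ∈ Icc (0 : ℝ) 1) {s t : SType K d}
    (hs : s.2 ∈ Dset d) (ht : t.2 ∈ Dset d) : wTheta θ s t ∈ Icc (0 : ℝ) 1 := by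
  obtain ⟨h0, h1⟩ := sum_mul_mem_Icc_of_mem_Dset hs ht
  exact ⟨mul_nonneg h0 (hθ _ _).1, mul_le_one₀ h1 (hθ _ _).1 (hθ _ _).2⟩

lemma abs_sq_sub_sq_sub_le {a x y : ℝ} (ha : a ∈ Icc (0 : ℝ) 1) (hx : x ∈ Icc (0 : ℝ) 1)
    (hy : y ∈ Icc (0 : ℝ) 1) : |(a - x) ^ 2 - (a - y) ^ 2| ≤ 2 * |x - y| := by
  have hfac : (a - x) ^ 2 - (a - y) ^ 2 = (2 * a - x - y) * (y - x) := by ring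
  rw [hfac, abs_mul, abs_sub_comm y]
  exact mul_le_mul_of_nonneg_right
    (abs_le.2 ⟨by linarith [ha.1, hx.2, hy.2], by linarith [ha.2, hx.1, hy.1]⟩) (abs_nonneg _)

lemma abs_sq_sub_wTheta_sub_le (hθ : ∀ u v, θ u v ∈ Icc (0 : ℝ) 1) {a : ℝ}
    (ha : a ∈ Icc (0 : ℝ) 1) (u v : Fin K) {b b' c c' : Fin d → ℝ}
    (hb : b ∈ Dset d) (hb' : b' ∈ Dset d) (hc : c ∈ Dset d) (hc' : c' ∈ Dset d)
    {ε₁ ε₂ : ℝ} (hbb' : √(∑ r, (b r - b' r) ^ 2) ≤ ε₁) (hcc' : √(∑ r, (c r - c' r) ^ 2) ≤ ε₂) :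
    |(a - wTheta θ (u, b) (v, c)) ^ 2 - (a - wTheta θ (u, b') (v, c')) ^ 2| ≤ 2 * (ε₁ + ε₂) := by
  refine (abs_sq_sub_sq_sub_le ha (wTheta_mem_Icc hθ hb hc) (wTheta_mem_Icc hθ hb' hc')).trans ?_
  have hdot := abs_sum_mul_sub_sum_mul_le (b := b) (c' := c') hb'.2 hc.2
  have hw : |wTheta θ (u, b) (v, c) - wTheta θ (u, b') (v, c')| ≤ ε₁ + ε₂ := by
    rw [wTheta, wTheta, ← sub_mul, abs_mul, abs_of_nonneg (hθ u v).1]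
    exact (mul_le_of_le_one_right (abs_nonneg _) (hθ u v).2).trans
      (hdot.trans (add_le_add hbb' hcc'))
  linarith

end SquaredLoss

instance : IsProbabilityMeasure unif := ⟨by simp [unif]⟩

instance : IsProbabilityMeasure (volume.restrict (Ico (0 : ℝ) 1)) := ⟨by simp⟩

instance (d : ℕ) : IsProbabilityMeasure (unifD d) := by
  unfold unifD
  infer_instance

section Expectation

-- Zero measures are allowed so that `uniformOn univ` on an empty index type is covered.
variable {α : Type*} [MeasurableSpace α] {P : Measure α} [IsZeroOrProbabilityMeasure P]

lemma integral_le_of_forall_le {f : α → ℝ} {C : ℝ} (hC : 0 ≤ C) (h : ∀ x, f x ≤ C) :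
    ∫ x, f x ∂P ≤ C := by
  by_cases hf : Integrable f P
  · calc ∫ x, f x ∂P ≤ ∫ _, C ∂P := integral_mono hf (integrable_const C) h
      _ = P.real univ * C := by rw [integral_const, smul_eq_mul]
      _ ≤ C := mul_le_of_le_one_left hC measureReal_le_one
  · rw [integral_undef hf]
    exact hC

lemma abs_integral_sub_integral_le {f g : α → ℝ} (hf : Integrable f P) (hg : Integrable g P)
    {C : ℝ} (hC : 0 ≤ C) (h : ∀ x, |f x - g x| ≤ C) :
    |∫ x, f x ∂P - ∫ x, g x ∂P| ≤ C := by
  rw [← integral_sub hf hg]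
  exact abs_integral_le_integral_abs.trans (integral_le_of_forall_le hC h)

lemma integral_uniformOn_univ {ι : Type*} [Fintype ι] [MeasurableSpace ι]
    [MeasurableSingletonClass ι] (f : ι → ℝ) :
    ∫ i, f i ∂(uniformOn univ) = (1 / Fintype.card ι) * ∑ i, f i := by
  rw [uniformOn, ProbabilityTheory.cond, Measure.restrict_univ, integral_smul_measure,
    integral_count]
  simp

end Expectation

section Risks

variable {K d : ℕ} {θ : Fin K → Fin K → ℝ}

@[fun_prop]
lemma Measurable.wTheta {α : Type*} [MeasurableSpace α] {s t : α → SType K d}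
    (hs : Measurable s) (ht : Measurable t) : Measurable fun x => wTheta θ (s x) (t x) := by
  unfold _root_.wTheta
  refine Measurable.mul (Finset.measurable_sum _ fun r _ => by fun_prop) ?_
  exact (measurable_of_countable fun q : Fin K × Fin K => θ q.1 q.2).comp
    ((measurable_fst.comp hs).prodMk (measurable_fst.comp ht))

lemma integrable_sq_sub_wTheta {α : Type*} [MeasurableSpace α] {P : Measure α}
    [IsFiniteMeasure P] (hθ : ∀ u v, θ u v ∈ Icc (0 : ℝ) 1) {f : α → ℝ} {s t : α → SType K d}
    (hf : Measurable f) (hs : Measurable s) (ht : Measurable t) (hf1 : ∀ x, f x ∈ Icc (0 : ℝ) 1)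
    (hs1 : ∀ x, (s x).2 ∈ Dset d) (ht1 : ∀ x, (t x).2 ∈ Dset d) :
    Integrable (fun x => (f x - wTheta θ (s x) (t x)) ^ 2) P := by
  refine Integrable.of_bound (by fun_prop) 1 (ae_of_all _ fun x => ?_)
  obtain ⟨hw0, hw1⟩ := wTheta_mem_Icc hθ (hs1 x) (ht1 x)
  rw [Real.norm_eq_abs, abs_sq, ← sq_abs]
  exact pow_le_one₀ (abs_nonneg _) (abs_le.2 ⟨by linarith [(hf1 x).1], by linarith [(hf1 x).2]⟩)

lemma RAmat_eq_integral {m n : ℕ} (A : Fin m → Fin n → ℝ) (S : Fin m → SType K d)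
    (T : Fin n → SType K d) (θ : Fin K → Fin K → ℝ) :
    RAmat A S T θ =
      ∫ p : Fin m × Fin n, (A p.1 p.2 - wTheta θ (S p.1) (T p.2)) ^ 2 ∂(uniformOn univ) := by
  rw [integral_uniformOn_univ, Fintype.card_prod, Fintype.card_fin, Fintype.card_fin,
    Fintype.sum_prod_type, RAmat, Nat.cast_mul, mul_comm (m : ℝ)]

lemma ROmS_eq_integral {m : ℕ} (w : ℝ → ℝ → ℝ) (x : Fin m → ℝ) (S : Fin m → SType K d)
    (τ : ℝ → SType K d) (θ : Fin K → Fin K → ℝ) :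
    ROmS w x S τ θ =
      ∫ i, ∫ y, (w (x i) y - wTheta θ (S i) (τ y)) ^ 2 ∂unif ∂(uniformOn univ) := by
  rw [integral_uniformOn_univ, Fintype.card_fin, ROmS]

lemma abs_RAmat_sub_le {m n : ℕ} {A : Fin m → Fin n → ℝ} (hA : ∀ i j, A i j ∈ Icc (0 : ℝ) 1)
    (hθ : ∀ u v, θ u v ∈ Icc (0 : ℝ) 1) (U : Fin m → Fin K) {B B' : Fin m → Fin d → ℝ}
    (hB : ∀ i, B i ∈ Dset d) (hB' : ∀ i, B' i ∈ Dset d) (V : Fin n → Fin K)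
    {D D' : Fin n → Fin d → ℝ} (hD : ∀ j, D j ∈ Dset d) (hD' : ∀ j, D' j ∈ Dset d) {ε : ℝ}
    (hε : 0 ≤ ε) (hBB' : ∀ i, √(∑ r, (B i r - B' i r) ^ 2) ≤ ε)
    (hDD' : ∀ j, √(∑ r, (D j r - D' j r) ^ 2) ≤ ε) :
    |RAmat A (fun i => (U i, B i)) (fun j => (V j, D j)) θ
      - RAmat A (fun i => (U i, B' i)) (fun j => (V j, D' j)) θ| ≤ 4 * ε := by
  rw [RAmat_eq_integral, RAmat_eq_integral]
  refine abs_integral_sub_integral_le .of_finite .of_finite (by positivity) fun p => ?_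
  exact (abs_sq_sub_wTheta_sub_le hθ (hA p.1 p.2) _ _ (hB p.1) (hB' p.1) (hD p.2) (hD' p.2)
    (hBB' p.1) (hDD' p.2)).trans_eq (by ring)

lemma abs_ROmS_sub_le {m : ℕ} {w : ℝ → ℝ → ℝ} (hw_meas : Measurable (Function.uncurry w))
    (hw : ∀ x y, w x y ∈ Icc (0 : ℝ) 1) (hθ : ∀ u v, θ u v ∈ Icc (0 : ℝ) 1) (x : Fin m → ℝ)
    (U : Fin m → Fin K) {B B' : Fin m → Fin d → ℝ} (hB : ∀ i, B i ∈ Dset d)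
    (hB' : ∀ i, B' i ∈ Dset d) {ν : ℝ → Fin K} (hν : Measurable ν) {δ : ℝ → Fin d → ℝ}
    (hδm : Measurable δ) (hδ : ∀ y, δ y ∈ Dset d) {ε : ℝ} (hε : 0 ≤ ε)
    (hBB' : ∀ i, √(∑ r, (B i r - B' i r) ^ 2) ≤ ε) :
    |ROmS w x (fun i => (U i, B i)) (fun y => (ν y, δ y)) θ
      - ROmS w x (fun i => (U i, B' i)) (fun y => (ν y, δ y)) θ| ≤ 2 * ε := by
  rw [ROmS_eq_integral, ROmS_eq_integral]
  refine abs_integral_sub_integral_le .of_finite .of_finite (by positivity) fun i => ?_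
  have hwi : Measurable (w (x i)) := hw_meas.comp measurable_prodMk_left
  refine abs_integral_sub_integral_le
    (integrable_sq_sub_wTheta hθ hwi measurable_const (by fun_prop) (hw _) (fun _ => hB i) hδ)
    (integrable_sq_sub_wTheta hθ hwi measurable_const (by fun_prop) (hw _) (fun _ => hB' i) hδ)
    (by positivity) fun y => ?_
  exact (abs_sq_sub_wTheta_sub_le hθ (hw _ _) _ _ (hB i) (hB' i) (hδ y) (hδ y)
    (ε₂ := 0) (hBB' i) (by simp)).trans_eq (by ring)

lemma abs_ROmSig_sub_le {w : ℝ → ℝ → ℝ} (hw_meas : Measurable (Function.uncurry w))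
    (hw : ∀ x y, w x y ∈ Icc (0 : ℝ) 1) (hθ : ∀ u v, θ u v ∈ Icc (0 : ℝ) 1)
    {μ : ℝ → Fin K} (hμ : Measurable μ) {β : ℝ → Fin d → ℝ} (hβm : Measurable β)
    (hβ : ∀ x, β x ∈ Dset d) {ν : ℝ → Fin K} (hν : Measurable ν) {δ δ' : ℝ → Fin d → ℝ}
    (hδm : Measurable δ) (hδ'm : Measurable δ') (hδ : ∀ y, δ y ∈ Dset d)
    (hδ' : ∀ y, δ' y ∈ Dset d) {ε : ℝ} (hε : 0 ≤ ε)
    (hδδ' : ∀ y, √(∑ r, (δ y r - δ' y r) ^ 2) ≤ ε) :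
    |ROmSig w (fun x => (μ x, β x)) (fun y => (ν y, δ y)) θ
      - ROmSig w (fun x => (μ x, β x)) (fun y => (ν y, δ' y)) θ| ≤ 2 * ε := by
  have hint : ∀ {γ : ℝ → Fin d → ℝ}, Measurable γ → (∀ y, γ y ∈ Dset d) →
      Integrable (fun p : ℝ × ℝ => (w p.1 p.2 - wTheta θ (μ p.1, β p.1) (ν p.2, γ p.2)) ^ 2)
        (unif.prod unif) := fun hγm hγ =>
    integrable_sq_sub_wTheta hθ hw_meas (by fun_prop) (by fun_prop) (fun p => hw _ _)
      (fun p => hβ p.1) (fun p => hγ p.2)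
  refine abs_integral_sub_integral_le (hint hδm hδ).integral_prod_left
    (hint hδ'm hδ').integral_prod_left (by positivity) fun x => ?_
  have hwx : Measurable (w x) := hw_meas.comp measurable_prodMk_left
  have hsec : Integrable (fun y => (w x y - wTheta θ (μ x, β x) (ν y, δ y)) ^ 2) unif :=
    integrable_sq_sub_wTheta hθ hwx measurable_const (by fun_prop) (hw x) (fun _ => hβ x) hδ
  have hsec' : Integrable (fun y => (w x y - wTheta θ (μ x, β x) (ν y, δ' y)) ^ 2) unif :=
    integrable_sq_sub_wTheta hθ hwx measurable_const (by fun_prop) (hw x) (fun _ => hβ x) hδ'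
  refine abs_integral_sub_integral_le hsec hsec' (by positivity) fun y => ?_
  exact (abs_sq_sub_wTheta_sub_le hθ (hw _ _) _ _ (hβ x) (hβ x) (hδ y) (hδ' y)
    (ε₁ := 0) (by simp) (hδδ' y)).trans_eq (by ring)

end Risks

section Indicators

lemma abs_ite_sub_ite_le_one (p q : Prop) [Decidable p] [Decidable q] :
    |(if p then (1 : ℝ) else 0) - (if q then 1 else 0)| ≤ 1 := by
  split_ifs <;> norm_num

lemma norm_sum_abs_ite_sub_ite_le {d : ℕ} (p q : Fin d → Prop) [∀ r, Decidable (p r)]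
    [∀ r, Decidable (q r)] :
    ‖∑ r, |(if p r then (1 : ℝ) else 0) - (if q r then 1 else 0)|‖ ≤ d := by
  rw [Real.norm_of_nonneg (Finset.sum_nonneg fun r _ => abs_nonneg _)]
  exact (Finset.sum_le_sum fun r _ => abs_ite_sub_ite_le_one _ _).trans (by simp)

lemma abs_ite_and_forall_sub_ite_le {ι : Type*} [Fintype ι] {p : Prop} {q q' : ι → Prop}
    [Decidable p] [∀ i, Decidable (q i)] [∀ i, Decidable (q' i)] [Decidable (∀ i, q i)]
    [Decidable (∀ i, q' i)] :
    |(if p ∧ ∀ i, q i then (1 : ℝ) else 0) - (if p ∧ ∀ i, q' i then 1 else 0)| ≤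
      ∑ i, |(if q i then (1 : ℝ) else 0) - (if q' i then 1 else 0)| := by
  by_cases h : ∀ i, (q i ↔ q' i)
  · simp only [forall_congr' h, sub_self, abs_zero]
    positivity
  · obtain ⟨i, hi⟩ := not_forall.1 h
    have hterm : |(if q i then (1 : ℝ) else 0) - (if q' i then 1 else 0)| = 1 := by
      by_cases hq : q i <;> by_cases hq' : q' i <;> simp_all
    calc _ ≤ (1 : ℝ) := abs_ite_sub_ite_le_one _ _
      _ = _ := hterm.symm
      _ ≤ _ := Finset.single_le_sum
        (f := fun j => |(if q j then (1 : ℝ) else 0) - (if q' j then 1 else 0)|)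
        (fun j _ => abs_nonneg _) (Finset.mem_univ i)

lemma abs_ite_le_sub_ite_le_eq_indicator (a a' t : ℝ) :
    |(if a ≤ t then (1 : ℝ) else 0) - (if a' ≤ t then 1 else 0)| =
      (Ico (min a a') (max a a')).indicator 1 t := by
  by_cases h : a ≤ t <;> by_cases h' : a' ≤ t <;> simp [indicator, h, h']

lemma integral_abs_ite_le_sub_ite_le_le (a a' : ℝ) :
    ∫ t, |(if a ≤ t then (1 : ℝ) else 0) - (if a' ≤ t then 1 else 0)|
      ∂(volume.restrict (Ico 0 1)) ≤ |a - a'| := by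
  simp_rw [abs_ite_le_sub_ite_le_eq_indicator, integral_indicator_one measurableSet_Ico]
  calc (volume.restrict (Ico 0 1)).real (Ico (min a a') (max a a'))
      ≤ volume.real (Ico (min a a') (max a a')) :=
        ENNReal.toReal_mono (by simp) (Measure.restrict_apply_le _ _)
    _ = |a - a'| := by
      rw [Real.volume_real_Ico_of_le min_le_max, max_sub_min_eq_abs, abs_sub_comm]

lemma integral_sum_abs_ite_le_sub_ite_le_le {d : ℕ} (a a' : Fin d → ℝ) :
    ∫ c, ∑ r, |(if a r ≤ c r then (1 : ℝ) else 0) - (if a' r ≤ c r then 1 else 0)| ∂(unifD d)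
      ≤ ∑ r, |a r - a' r| := by
  set h : Fin d → ℝ → ℝ := fun r t =>
    |(if a r ≤ t then (1 : ℝ) else 0) - (if a' r ≤ t then 1 else 0)|
  have hmeas : ∀ r, Measurable (h r) := fun r =>
    ((Measurable.ite measurableSet_Ici measurable_const measurable_const).sub
      (Measurable.ite measurableSet_Ici measurable_const measurable_const)).abs
  have hint : ∀ r, Integrable (fun c : Fin d → ℝ => h r (c r)) (unifD d) := fun r =>
    Integrable.of_bound ((hmeas r).comp (measurable_pi_apply r)).aestronglyMeasurable 1
      (ae_of_all _ fun c => (abs_abs _).trans_le (abs_ite_sub_ite_le_one _ _))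
  rw [integral_finsetSum _ fun r _ => hint r]
  refine Finset.sum_le_sum fun r _ => ?_
  have hmp := measurePreserving_eval (fun _ : Fin d => volume.restrict (Ico (0 : ℝ) 1)) r
  calc ∫ c, h r (c r) ∂(unifD d) = ∫ t, h r t ∂(volume.restrict (Ico 0 1)) := by
        rw [← hmp.map_eq, integral_map (measurable_pi_apply r).aemeasurable
          (hmeas r).aestronglyMeasurable]
        rfl
    _ ≤ |a r - a' r| := integral_abs_ite_le_sub_ite_le_le _ _

end Indicators

section LatentCDF

variable {K d : ℕ}

def latentCDF {Ω : Type*} [MeasurableSpace Ω] (P : Measure Ω) (τ : Ω → SType K d) (k : Fin K)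
    (c : Fin d → ℝ) : ℝ :=
  ∫ ω, (if (τ ω).1 ≤ k ∧ (∀ r, (τ ω).2 r ≤ c r) then (1 : ℝ) else 0) ∂P

lemma PsiTau_eq_latentCDF (τ : ℝ → SType K d) : PsiTau τ = latentCDF unif τ := rfl

lemma PsiT_eq_latentCDF {n : ℕ} (T : Fin n → SType K d) :
    PsiT T = latentCDF (uniformOn univ) T := by
  ext k c
  rw [latentCDF, integral_uniformOn_univ, Fintype.card_fin, PsiT]

variable {Ω : Type*} [MeasurableSpace Ω] {P : Measure Ω} [IsZeroOrProbabilityMeasure P]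
  {u : Ω → Fin K} {b b' : Ω → Fin d → ℝ}

lemma measurable_sum_abs_ite_le_sub_ite_le (hb : Measurable b) (hb' : Measurable b') :
    Measurable fun p : (Fin d → ℝ) × Ω =>
      ∑ r, |(if b p.2 r ≤ p.1 r then (1 : ℝ) else 0) - (if b' p.2 r ≤ p.1 r then 1 else 0)| := by
  refine Finset.measurable_sum _ fun r _ => (Measurable.sub ?_ ?_).abs <;>
    exact Measurable.ite (measurableSet_le (by fun_prop) (by fun_prop)) measurable_const
      measurable_const

lemma sq_latentCDF_sub_le (hu : Measurable u) (hb : Measurable b) (hb' : Measurable b')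
    (k : Fin K) (c : Fin d → ℝ) :
    (latentCDF P (fun ω => (u ω, b ω)) k c - latentCDF P (fun ω => (u ω, b' ω)) k c) ^ 2 ≤
      ∫ ω, ∑ r, |(if b ω r ≤ c r then (1 : ℝ) else 0) - (if b' ω r ≤ c r then 1 else 0)| ∂P := by
  have hind : ∀ {γ : Ω → Fin d → ℝ}, Measurable γ →
      Integrable (fun ω => if u ω ≤ k ∧ ∀ r, γ ω r ≤ c r then (1 : ℝ) else 0) P := fun hγ => by
    refine Integrable.of_bound
      (Measurable.ite ?_ measurable_const measurable_const).aestronglyMeasurable 1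
      (ae_of_all _ fun ω => by split_ifs <;> norm_num)
    measurability
  have hE : Integrable (fun ω => ∑ r,
      |(if b ω r ≤ c r then (1 : ℝ) else 0) - (if b' ω r ≤ c r then 1 else 0)|) P :=
    Integrable.of_bound ((measurable_sum_abs_ite_le_sub_ite_le hb hb').comp
      measurable_prodMk_left).aestronglyMeasurable d
      (ae_of_all _ fun ω => norm_sum_abs_ite_sub_ite_le _ _)
  have hle_one : |latentCDF P (fun ω => (u ω, b ω)) k c
      - latentCDF P (fun ω => (u ω, b' ω)) k c| ≤ 1 :=
    abs_integral_sub_integral_le (hind hb) (hind hb') zero_le_one fun ω =>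
      abs_ite_sub_ite_le_one _ _
  have hle_E : |latentCDF P (fun ω => (u ω, b ω)) k c
      - latentCDF P (fun ω => (u ω, b' ω)) k c| ≤ ∫ ω, ∑ r,
        |(if b ω r ≤ c r then (1 : ℝ) else 0) - (if b' ω r ≤ c r then 1 else 0)| ∂P := by
    rw [latentCDF, latentCDF, ← integral_sub (hind hb) (hind hb')]
    exact abs_integral_le_integral_abs.trans
      (integral_mono ((hind hb).sub (hind hb')).abs hE fun ω => abs_ite_and_forall_sub_ite_le)
  rw [← sq_abs, sq]
  exact (mul_le_mul hle_one hle_E (abs_nonneg _) zero_le_one).trans_eq (one_mul _)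

lemma PsiNormSq_latentCDF_sub_le (hu : Measurable u) (hb : Measurable b) (hb' : Measurable b')
    {ε : ℝ} (hε : 0 ≤ ε) (hbb' : ∀ ω r, |b ω r - b' ω r| ≤ ε) :
    PsiNormSq (fun k c => latentCDF P (fun ω => (u ω, b ω)) k c
      - latentCDF P (fun ω => (u ω, b' ω)) k c) ≤ K * d * ε := by
  set E : (Fin d → ℝ) × Ω → ℝ := fun p =>
    ∑ r, |(if b p.2 r ≤ p.1 r then (1 : ℝ) else 0) - (if b' p.2 r ≤ p.1 r then 1 else 0)|
  have hE : Integrable E ((unifD d).prod P) :=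
    Integrable.of_bound (measurable_sum_abs_ite_le_sub_ite_le hb hb').aestronglyMeasurable d
      (ae_of_all _ fun p => norm_sum_abs_ite_sub_ite_le _ _)
  have hE_le : ∫ c, ∫ ω, E (c, ω) ∂P ∂(unifD d) ≤ d * ε := by
    rw [integral_integral_swap hE]
    refine integral_le_of_forall_le (by positivity) fun ω => ?_
    calc ∫ c, E (c, ω) ∂(unifD d) ≤ ∑ r, |b ω r - b' ω r| :=
          integral_sum_abs_ite_le_sub_ite_le_le (b ω) (b' ω)
      _ ≤ ∑ _r : Fin d, ε := Finset.sum_le_sum fun r _ => hbb' ω r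
      _ = d * ε := by simp
  calc PsiNormSq _ ≤ ∑ _k : Fin K, (d * ε : ℝ) := Finset.sum_le_sum fun k _ =>
        (integral_mono_of_nonneg (ae_of_all _ fun c => sq_nonneg _) hE.integral_prod_left
          (ae_of_all _ (sq_latentCDF_sub_le hu hb hb' k))).trans hE_le
    _ = K * d * ε := by simp [mul_assoc]

end LatentCDF

lemma PsiNormSq_PsiT_sub_le {n K d : ℕ} (V : Fin n → Fin K) (D D' : Fin n → Fin d → ℝ) {ε : ℝ}
    (hε : 0 ≤ ε) (hDD' : ∀ j r, |D j r - D' j r| ≤ ε) :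
    PsiNormSq (fun k c => PsiT (fun j => (V j, D j)) k c - PsiT (fun j => (V j, D' j)) k c)
      ≤ K * d * ε := by
  simp only [PsiT_eq_latentCDF]
  exact PsiNormSq_latentCDF_sub_le (by fun_prop) (by fun_prop) (by fun_prop) hε hDD'

lemma PsiNormSq_PsiTau_sub_le {K d : ℕ} {ν : ℝ → Fin K} (hν : Measurable ν) {δ δ' : ℝ → Fin d → ℝ}
    (hδ : Measurable δ) (hδ' : Measurable δ') {ε : ℝ} (hε : 0 ≤ ε)
    (hδδ' : ∀ y r, |δ y r - δ' y r| ≤ ε) :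
    PsiNormSq (fun k c => PsiTau (fun y => (ν y, δ y)) k c - PsiTau (fun y => (ν y, δ' y)) k c)
      ≤ K * d * ε := by
  simp only [PsiTau_eq_latentCDF]
  exact PsiNormSq_latentCDF_sub_le hν hδ hδ' hε hδδ'

theorem epsilon_cover_approximation_general
    (m n K d : ℕ) (ε : ℝ) (hε : 0 ≤ ε)
    (w : ℝ → ℝ → ℝ) (hw_meas : Measurable (Function.uncurry w))
    (hw : ∀ x y, w x y ∈ Set.Icc (0:ℝ) 1)
    (x : Fin m → ℝ)
    (A : Fin m → Fin n → ℝ) (hA : ∀ i j, A i j = 0 ∨ A i j = 1)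
    -- `S = (U,B)`, `S̄ = (U,B̄)` with `‖B_i − B̄_i‖ ≤ ε`
    (U : Fin m → Fin K) (B Bbar : Fin m → Fin d → ℝ)
    (hB : ∀ i, B i ∈ Dset d) (hBbar : ∀ i, Bbar i ∈ Dset d)
    (hBclose : ∀ i, Real.sqrt (∑ r : Fin d, (B i r - Bbar i r) ^ 2) ≤ ε)
    -- `T = (V,D)`, `T̄ = (V,D̄)` with `‖D_j − D̄_j‖ ≤ ε`
    (V : Fin n → Fin K) (D Dbar : Fin n → Fin d → ℝ)
    (hD : ∀ j, D j ∈ Dset d) (hDbar : ∀ j, Dbar j ∈ Dset d)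
    (hDclose : ∀ j, Real.sqrt (∑ r : Fin d, (D j r - Dbar j r) ^ 2) ≤ ε)
    -- `σ = (μ,β)`, `σ̄ = (μ,β̄)` with `‖β(x) − β̄(x)‖ ≤ ε` pointwise
    (μfn : ℝ → Fin K) (hμ : Measurable μfn)
    (β βbar : ℝ → Fin d → ℝ) (hβm : Measurable β) (hβbarm : Measurable βbar)
    (hβ : ∀ z, β z ∈ Dset d)
    (hβclose : ∀ z, Real.sqrt (∑ r : Fin d, (β z r - βbar z r) ^ 2) ≤ ε)
    -- `τ = (ν,δ)`, `τ̄ = (ν,δ̄)` with `‖δ(y) − δ̄(y)‖ ≤ ε` pointwise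
    (νfn : ℝ → Fin K) (hν : Measurable νfn)
    (δf δbar : ℝ → Fin d → ℝ) (hδm : Measurable δf) (hδbarm : Measurable δbar)
    (hδ : ∀ z, δf z ∈ Dset d) (hδbar : ∀ z, δbar z ∈ Dset d)
    (hδclose : ∀ z, Real.sqrt (∑ r : Fin d, (δf z r - δbar z r) ^ 2) ≤ ε)
    (θ : Fin K → Fin K → ℝ) (hθ : ∀ u v, θ u v ∈ Set.Icc (0:ℝ) 1) :
    |RAmat A (fun i => (U i, B i)) (fun j => (V j, D j)) θ
      - RAmat A (fun i => (U i, Bbar i)) (fun j => (V j, Dbar j)) θ| ≤ 12 * ε ∧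
    |ROmS w x (fun i => (U i, B i)) (fun y => (νfn y, δf y)) θ
      - ROmS w x (fun i => (U i, Bbar i)) (fun y => (νfn y, δf y)) θ| ≤ 12 * ε ∧
    |ROmSig w (fun z => (μfn z, β z)) (fun y => (νfn y, δf y)) θ
      - ROmSig w (fun z => (μfn z, β z)) (fun y => (νfn y, δbar y)) θ| ≤ 12 * ε ∧
    PsiNormSq (fun k c => PsiT (fun i => (U i, B i)) k c
      - PsiT (fun i => (U i, Bbar i)) k c) ≤ K * d * ε ∧
    PsiNormSq (fun k c => PsiT (fun j => (V j, D j)) k c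
      - PsiT (fun j => (V j, Dbar j)) k c) ≤ K * d * ε ∧
    PsiNormSq (fun k c => PsiTau (fun z => (μfn z, β z)) k c
      - PsiTau (fun z => (μfn z, βbar z)) k c) ≤ K * d * ε ∧
    PsiNormSq (fun k c => PsiTau (fun y => (νfn y, δf y)) k c
      - PsiTau (fun y => (νfn y, δbar y)) k c) ≤ K * d * ε := by
  have hA01 : ∀ i j, A i j ∈ Icc (0 : ℝ) 1 := fun i j => by rcases hA i j with h | h <;> simp [h]
  have coord {f f' : Fin d → ℝ} (h : √(∑ r, (f r - f' r) ^ 2) ≤ ε) (r : Fin d) :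
      |f r - f' r| ≤ ε :=
    (abs_apply_le_sqrt_sum_sq (fun r => f r - f' r) r).trans h
  refine ⟨?_, ?_, ?_, PsiNormSq_PsiT_sub_le U B Bbar hε fun i => coord (hBclose i),
    PsiNormSq_PsiT_sub_le V D Dbar hε fun j => coord (hDclose j),
    PsiNormSq_PsiTau_sub_le hμ hβm hβbarm hε fun z => coord (hβclose z),
    PsiNormSq_PsiTau_sub_le hν hδm hδbarm hε fun y => coord (hδclose y)⟩
  · exact (abs_RAmat_sub_le hA01 hθ U hB hBbar V hD hDbar hε hBclose hDclose).trans (by linarith)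
  · exact (abs_ROmS_sub_le hw_meas hw hθ x U hB hBbar hν hδm hδ hε hBclose).trans (by linarith)
  · exact (abs_ROmSig_sub_le hw_meas hw hθ hμ hβm hβ hν hδm hδbarm hδ hδbar hε hδclose).trans
      (by linarith)

/-- Perturbation bounds for the dot-product-plus-blockmodel: replacing
latent positions by `ε`-close ones changes the risks by at most `12ε` and the squared CDF
distances are at most `Kdε`. -/
theorem epsilon_cover_approximation
    (m n K d : ℕ) (ε : ℝ) (hε : 0 ≤ ε)
    (w : ℝ → ℝ → ℝ) (hw_meas : Measurable (Function.uncurry w))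
    (hw : ∀ x y, w x y ∈ Set.Icc (0:ℝ) 1)
    (x : Fin m → ℝ) (hx : ∀ i, x i ∈ Set.Icc (0:ℝ) 1)
    (A : Fin m → Fin n → ℝ) (hA : ∀ i j, A i j = 0 ∨ A i j = 1)
    -- `S = (U,B)`, `S̄ = (U,B̄)` with `‖B_i − B̄_i‖ ≤ ε`
    (U : Fin m → Fin K) (B Bbar : Fin m → Fin d → ℝ)
    (hB : ∀ i, B i ∈ Dset d) (hBbar : ∀ i, Bbar i ∈ Dset d)
    (hBclose : ∀ i, Real.sqrt (∑ r : Fin d, (B i r - Bbar i r) ^ 2) ≤ ε)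
    -- `T = (V,D)`, `T̄ = (V,D̄)` with `‖D_j − D̄_j‖ ≤ ε`
    (V : Fin n → Fin K) (D Dbar : Fin n → Fin d → ℝ)
    (hD : ∀ j, D j ∈ Dset d) (hDbar : ∀ j, Dbar j ∈ Dset d)
    (hDclose : ∀ j, Real.sqrt (∑ r : Fin d, (D j r - Dbar j r) ^ 2) ≤ ε)
    -- `σ = (μ,β)`, `σ̄ = (μ,β̄)` with `‖β(x) − β̄(x)‖ ≤ ε` pointwise
    (μfn : ℝ → Fin K) (hμ : Measurable μfn)
    (β βbar : ℝ → Fin d → ℝ) (hβm : Measurable β) (hβbarm : Measurable βbar)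
    (hβ : ∀ z, β z ∈ Dset d) (hβbar : ∀ z, βbar z ∈ Dset d)
    (hβclose : ∀ z, Real.sqrt (∑ r : Fin d, (β z r - βbar z r) ^ 2) ≤ ε)
    -- `τ = (ν,δ)`, `τ̄ = (ν,δ̄)` with `‖δ(y) − δ̄(y)‖ ≤ ε` pointwise
    (νfn : ℝ → Fin K) (hν : Measurable νfn)
    (δf δbar : ℝ → Fin d → ℝ) (hδm : Measurable δf) (hδbarm : Measurable δbar)
    (hδ : ∀ z, δf z ∈ Dset d) (hδbar : ∀ z, δbar z ∈ Dset d)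
    (hδclose : ∀ z, Real.sqrt (∑ r : Fin d, (δf z r - δbar z r) ^ 2) ≤ ε)
    (θ : Fin K → Fin K → ℝ) (hθ : ∀ u v, θ u v ∈ Set.Icc (0:ℝ) 1) :
    |RAmat A (fun i => (U i, B i)) (fun j => (V j, D j)) θ
      - RAmat A (fun i => (U i, Bbar i)) (fun j => (V j, Dbar j)) θ| ≤ 12 * ε ∧
    |ROmS w x (fun i => (U i, B i)) (fun y => (νfn y, δf y)) θ
      - ROmS w x (fun i => (U i, Bbar i)) (fun y => (νfn y, δf y)) θ| ≤ 12 * ε ∧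
    |ROmSig w (fun z => (μfn z, β z)) (fun y => (νfn y, δf y)) θ
      - ROmSig w (fun z => (μfn z, β z)) (fun y => (νfn y, δbar y)) θ| ≤ 12 * ε ∧
    PsiNormSq (fun k c => PsiT (fun i => (U i, B i)) k c
      - PsiT (fun i => (U i, Bbar i)) k c) ≤ K * d * ε ∧
    PsiNormSq (fun k c => PsiT (fun j => (V j, D j)) k c
      - PsiT (fun j => (V j, Dbar j)) k c) ≤ K * d * ε ∧
    PsiNormSq (fun k c => PsiTau (fun z => (μfn z, β z)) k c
      - PsiTau (fun z => (μfn z, βbar z)) k c) ≤ K * d * ε ∧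
    PsiNormSq (fun k c => PsiTau (fun y => (νfn y, δf y)) k c
      - PsiTau (fun y => (νfn y, δbar y)) k c) ≤ K * d * ε :=
  epsilon_cover_approximation_general m n K d ε hε w hw_meas hw x A hA U B Bbar hB hBbar hBclose V D
    Dbar hD hDbar hDclose μfn hμ β βbar hβm hβbarm hβ hβclose νfn hν δf δbar hδm hδbarm hδ hδbar
    hδclose θ hθ

end
end
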